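/- Let 1 < p < ∞. Then there exists an exponent function q : ℕ → (1,∞) with q(n) → p as n → ∞ such that ℓ^{q(·)} does not embed isomorphically into ℓ^p: there are no linear map T : ℓ^{q(·)} → ℓ^p and constants 0 < c ≤ C < ∞ with c·Φ_q(x) ≤ ‖T x‖_{ℓ^p} ≤ C·Φ_q(x) for all x ∈ ℓ^{q(·)}. -/
import Mathlib


open scoped ENNReal

/-- `t ⊞_p s`: for `p < ∞`, `(t^p + s^p)^(1/p)`; for `p = ∞`, `max t s`. -/
noncomputable def boxPlus (p : ℝ≥0∞) (t s : ℝ) : ℝ :=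
  if p = ∞ then max t s else (t ^ p.toReal + s ^ p.toReal) ^ (1 / p.toReal)

/-- The recursively defined seminorms `|||x|||_(k)` (0-indexed). -/
noncomputable def seqNorm (p : ℕ → ℝ≥0∞) (x : ℕ → ℝ) : ℕ → ℝ
  | 0 => boxPlus (p 0) |x 0| |x 1|
  | k + 1 => boxPlus (p (k + 1)) (seqNorm p x k) |x (k + 2)|

/-- `Φ_p(x) = lim_k |||x|||_(k)`, as the supremum of the nondecreasing sequence. -/
noncomputable def Phi (p : ℕ → ℝ≥0∞) (x : ℕ → ℝ) : ℝ≥0∞ :=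
  ⨆ k, ENNReal.ofReal (seqNorm p x k)

/-- `x` is a bounded real sequence, i.e. `x ∈ ℓ^∞`. -/
def IsBddSeq (x : ℕ → ℝ) : Prop := ∃ M : ℝ, ∀ n, |x n| ≤ M

/-- Membership in the variable exponent space `ℓ^{p(·)}`. -/
def MemVLp (p : ℕ → ℝ≥0∞) (x : ℕ → ℝ) : Prop := IsBddSeq x ∧ Phi p x < ⊤

/-- The exponent function `ℕ → [1,∞]` associated with a real exponent function. -/
noncomputable def toE (q : ℕ → ℝ) : ℕ → ℝ≥0∞ := fun k => ENNReal.ofReal (q k)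

/-- The classical `ℓ^p` norm `(∑ₙ |yₙ|^p)^{1/p}`, valued in `[0,∞]`. -/
noncomputable def lpNormE (p : ℝ) (y : ℕ → ℝ) : ℝ≥0∞ :=
  (∑' n, ENNReal.ofReal (|y n| ^ p)) ^ (1 / p)

lemma boxPlus_toE {q : ℕ → ℝ} (hq : ∀ n, 1 < q n) (k : ℕ) (t s : ℝ) :
    boxPlus (toE q k) t s = (t ^ q k + s ^ q k) ^ (1 / q k) := by
  have h1 : (0:ℝ) ≤ q k := le_of_lt (lt_trans one_pos (hq k))
  simp [boxPlus, toE, ENNReal.ofReal_ne_top, ENNReal.toReal_ofReal h1]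

lemma seqNorm_nonneg {q : ℕ → ℝ} (hq : ∀ n, 1 < q n) (x : ℕ → ℝ) :
    ∀ k, 0 ≤ seqNorm (toE q) x k := by
  intro k
  induction k with
  | zero => rw [seqNorm, boxPlus_toE hq]; positivity
  | succ k ih =>
    rw [seqNorm, boxPlus_toE hq]
    apply Real.rpow_nonneg
    have h1 : (0:ℝ) ≤ seqNorm (toE q) x k ^ q (k+1) := Real.rpow_nonneg ih _
    positivity

lemma seqNorm_succ {q : ℕ → ℝ} (hq : ∀ n, 1 < q n) (x : ℕ → ℝ) (k : ℕ) :
    seqNorm (toE q) x (k + 1)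
      = (seqNorm (toE q) x k ^ q (k+1) + |x (k + 2)| ^ q (k+1)) ^ (1 / q (k+1)) := by
  rw [seqNorm, boxPlus_toE hq]

/-- `(t^a)^(1/a) = t` for `t ≥ 0`, `a ≠ 0`. -/
lemma rpow_rpow_inv {t a : ℝ} (ht : 0 ≤ t) (ha : a ≠ 0) : (t ^ a) ^ (1 / a) = t := by
  rw [← Real.rpow_mul ht, mul_one_div, div_self ha, Real.rpow_one]

lemma seqNorm_le_succ {q : ℕ → ℝ} (hq : ∀ n, 1 < q n) (x : ℕ → ℝ) (k : ℕ) :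
    seqNorm (toE q) x k ≤ seqNorm (toE q) x (k + 1) := by
  have h0 := seqNorm_nonneg hq x k
  have hqk : 0 < q (k+1) := lt_trans one_pos (hq (k+1))
  rw [seqNorm_succ hq]
  calc seqNorm (toE q) x k
      = (seqNorm (toE q) x k ^ q (k+1)) ^ (1 / q (k+1)) := (rpow_rpow_inv h0 hqk.ne').symm
    _ ≤ _ := by
        apply Real.rpow_le_rpow (by positivity) _ (by positivity)
        exact le_add_of_nonneg_right (by positivity)

lemma seqNorm_mono {q : ℕ → ℝ} (hq : ∀ n, 1 < q n) (x : ℕ → ℝ) {k l : ℕ} (h : k ≤ l) :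
    seqNorm (toE q) x k ≤ seqNorm (toE q) x l := by
  induction l with
  | zero => simp_all
  | succ l ih =>
    rcases Nat.lt_or_ge k (l+1) with h' | h'
    · exact (ih (Nat.lt_succ_iff.mp h')).trans (seqNorm_le_succ hq x l)
    · have : k = l + 1 := le_antisymm h h'
      simp [this]

/-- If the tail of `x` vanishes from index `m+2` on, `seqNorm` is constant from `m`. -/
lemma seqNorm_stab {q : ℕ → ℝ} (hq : ∀ n, 1 < q n) (x : ℕ → ℝ) (m : ℕ)
    (hx : ∀ n, m + 2 ≤ n → x n = 0) :
    ∀ k, m ≤ k → seqNorm (toE q) x k = seqNorm (toE q) x m := by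
  intro k hk
  induction k with
  | zero => simp [Nat.le_zero.mp hk]
  | succ k ih =>
    rcases Nat.lt_or_ge m (k+1) with h' | h'
    · have hm : m ≤ k := Nat.lt_succ_iff.mp h'
      have hqk : 0 < q (k+1) := lt_trans one_pos (hq (k+1))
      rw [seqNorm_succ hq, hx (k+2) (by omega), abs_zero,
        Real.zero_rpow hqk.ne', add_zero, rpow_rpow_inv (seqNorm_nonneg hq x k) hqk.ne']
      exact ih hm
    · have : m = k + 1 := le_antisymm hk h'
      simp [this]

lemma Phi_eq_of_stab {q : ℕ → ℝ} (hq : ∀ n, 1 < q n) (x : ℕ → ℝ) (m : ℕ)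
    (hx : ∀ n, m + 2 ≤ n → x n = 0) :
    Phi (toE q) x = ENNReal.ofReal (seqNorm (toE q) x m) := by
  refine le_antisymm (iSup_le fun k => ?_) (le_iSup (fun k => ENNReal.ofReal (seqNorm (toE q) x k)) m)
  rcases Nat.lt_or_ge k m with h | h
  · exact ENNReal.ofReal_le_ofReal (seqNorm_mono hq x h.le)
  · rw [seqNorm_stab hq x m hx k h]

lemma memVLp_of_finsupp {q : ℕ → ℝ} (hq : ∀ n, 1 < q n) (x : ℕ → ℝ) (m : ℕ)
    (hx : ∀ n, m + 2 ≤ n → x n = 0) : MemVLp (toE q) x := by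
  constructor
  · refine ⟨∑ i ∈ Finset.range (m+2), |x i|, fun n => ?_⟩
    rcases Nat.lt_or_ge n (m+2) with h | h
    · exact Finset.single_le_sum (f := fun i => |x i|) (fun i _ => abs_nonneg _)
        (Finset.mem_range.mpr h)
    · rw [hx n h, abs_zero]
      exact Finset.sum_nonneg fun i _ => abs_nonneg _
  · rw [Phi_eq_of_stab hq x m hx]
    exact ENNReal.ofReal_lt_top

/-- Power-mean `M_p ≤ M_2` for two points, `p ≤ 2`. -/
lemma pow_mean_low {p : ℝ} (hp0 : 0 < p) (hp2 : p ≤ 2) {x y : ℝ} (hx : 0 ≤ x) (hy : 0 ≤ y) :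
    x ^ p + y ^ p ≤ 2 * ((x ^ (2:ℝ) + y ^ (2:ℝ)) / 2) ^ (p / 2) := by
  have he : (1:ℝ) ≤ 2 / p := (one_le_div hp0).mpr hp2
  have h := Real.arith_mean_le_rpow_mean (Finset.univ : Finset (Fin 2))
    (fun _ => (1:ℝ)/2) (![x ^ p, y ^ p]) (fun i _ => by norm_num)
    (by simp)
    (fun i _ => by fin_cases i <;> simp <;> positivity) he
  simp only [Fin.sum_univ_two] at h
  have hxx : (x ^ p) ^ (2/p) = x ^ (2:ℝ) := by
    rw [← Real.rpow_mul hx]; congr 1; field_simp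
  have hyy : (y ^ p) ^ (2/p) = y ^ (2:ℝ) := by
    rw [← Real.rpow_mul hy]; congr 1; field_simp
  simp only [Matrix.cons_val_zero, Matrix.cons_val_one, Matrix.head_cons, hxx, hyy] at h
  have h2 : (1:ℝ) / (2/p) = p / 2 := by field_simp
  rw [h2] at h
  have : (1:ℝ)/2 * x ^ p + 1/2 * y ^ p = (x ^ p + y ^ p) / 2 := by ring
  rw [this] at h
  have := (div_le_iff₀ (by norm_num : (0:ℝ) < 2)).mp h
  calc x ^ p + y ^ p ≤ (1/2 * (x^(2:ℝ)) + 1/2 * (y^(2:ℝ))) ^ (p/2) * 2 := this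
    _ = 2 * ((x ^ (2:ℝ) + y ^ (2:ℝ)) / 2) ^ (p / 2) := by rw [mul_comm]; congr 2; ring

/-- Power-mean `M_2 ≤ M_p` for two points, `2 ≤ p`. -/
lemma pow_mean_high {p : ℝ} (hp2 : 2 ≤ p) {x y : ℝ} (hx : 0 ≤ x) (hy : 0 ≤ y) :
    2 * ((x ^ (2:ℝ) + y ^ (2:ℝ)) / 2) ^ (p / 2) ≤ x ^ p + y ^ p := by
  have he : (1:ℝ) ≤ p / 2 := by linarith
  have h := Real.rpow_arith_mean_le_arith_mean_rpow (Finset.univ : Finset (Fin 2))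
    (fun _ => (1:ℝ)/2) (![x ^ (2:ℝ), y ^ (2:ℝ)]) (fun i _ => by norm_num)
    (by simp)
    (fun i _ => by fin_cases i <;> simp <;> positivity) he
  simp only [Fin.sum_univ_two] at h
  have hxx : (x ^ (2:ℝ)) ^ (p/2) = x ^ p := by
    rw [← Real.rpow_mul hx]; congr 1; field_simp
  have hyy : (y ^ (2:ℝ)) ^ (p/2) = y ^ p := by
    rw [← Real.rpow_mul hy]; congr 1; field_simp
  simp only [Matrix.cons_val_zero, Matrix.cons_val_one, Matrix.head_cons, hxx, hyy] at h
  calc 2 * ((x ^ (2:ℝ) + y ^ (2:ℝ)) / 2) ^ (p / 2)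
      = 2 * (1/2 * x ^ (2:ℝ) + 1/2 * y ^ (2:ℝ)) ^ (p/2) := by congr 2; ring
    _ ≤ 2 * (1/2 * x ^ p + 1/2 * y ^ p) := by
        exact mul_le_mul_of_nonneg_left h (by norm_num)
    _ = x ^ p + y ^ p := by ring

/-- Subadditivity `(u+v)^s ≤ u^s + v^s` for `0 ≤ s ≤ 1`. -/
lemma rpow_subadd {s : ℝ} (hs0 : 0 ≤ s) (hs1 : s ≤ 1) {u v : ℝ} (hu : 0 ≤ u) (hv : 0 ≤ v) :
    (u + v) ^ s ≤ u ^ s + v ^ s := by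
  have h := NNReal.rpow_add_le_add_rpow (u.toNNReal) (v.toNNReal) hs0 hs1
  have := NNReal.coe_le_coe.mpr h
  push_cast [NNReal.coe_rpow] at this
  rwa [Real.coe_toNNReal u hu, Real.coe_toNNReal v hv] at this

/-- Superadditivity `u^s + v^s ≤ (u+v)^s` for `1 ≤ s`. -/
lemma rpow_superadd {s : ℝ} (hs1 : 1 ≤ s) {u v : ℝ} (hu : 0 ≤ u) (hv : 0 ≤ v) :
    u ^ s + v ^ s ≤ (u + v) ^ s := by
  have h := NNReal.add_rpow_le_rpow_add (u.toNNReal) (v.toNNReal) hs1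
  have := NNReal.coe_le_coe.mpr h
  push_cast [NNReal.coe_rpow] at this
  rwa [Real.coe_toNNReal u hu, Real.coe_toNNReal v hv] at this

lemma abs_sq_rpow (a : ℝ) : |a| ^ (2:ℝ) = a ^ 2 := by
  rw [Real.rpow_two, sq_abs]

lemma sq_rpow_half (a : ℝ) {p : ℝ} (hp : 0 ≤ p) : (a ^ 2) ^ (p/2) = |a| ^ p := by
  rw [← sq_abs, ← Real.rpow_two, ← Real.rpow_mul (abs_nonneg a),
    show (2:ℝ) * (p/2) = p by ring]

/-- Clarkson-type inequality, `1 ≤ p ≤ 2`. -/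
lemma clarkson_low {p : ℝ} (hp1 : 1 ≤ p) (hp2 : p ≤ 2) (a b : ℝ) :
    |a + b| ^ p + |a - b| ^ p ≤ 2 * (|a| ^ p + |b| ^ p) := by
  have hp0 : 0 < p := lt_of_lt_of_le one_pos hp1
  have h1 := pow_mean_low hp0 hp2 (abs_nonneg (a+b)) (abs_nonneg (a-b))
  have h2 : (|a+b| ^ (2:ℝ) + |a-b| ^ (2:ℝ)) / 2 = a ^ 2 + b ^ 2 := by
    rw [abs_sq_rpow, abs_sq_rpow]; ring
  rw [h2] at h1
  refine h1.trans ?_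
  have h3 : ((a:ℝ)^2 + b^2) ^ (p/2) ≤ (a^2) ^ (p/2) + (b^2) ^ (p/2) :=
    rpow_subadd (by positivity) (by linarith) (sq_nonneg a) (sq_nonneg b)
  rw [sq_rpow_half a hp0.le, sq_rpow_half b hp0.le] at h3
  linarith

/-- Reverse Clarkson-type inequality, `2 ≤ p`. -/
lemma clarkson_high {p : ℝ} (hp2 : 2 ≤ p) (a b : ℝ) :
    2 * (|a| ^ p + |b| ^ p) ≤ |a + b| ^ p + |a - b| ^ p := by
  have h1 := pow_mean_high hp2 (abs_nonneg (a+b)) (abs_nonneg (a-b))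
  have h2 : (|a+b| ^ (2:ℝ) + |a-b| ^ (2:ℝ)) / 2 = a ^ 2 + b ^ 2 := by
    rw [abs_sq_rpow, abs_sq_rpow]; ring
  rw [h2] at h1
  refine le_trans ?_ h1
  have h3 : (a^2) ^ (p/2) + (b^2) ^ (p/2) ≤ ((a:ℝ)^2 + b^2) ^ (p/2) :=
    rpow_superadd (by linarith) (sq_nonneg a) (sq_nonneg b)
  rw [sq_rpow_half a (by linarith), sq_rpow_half b (by linarith)] at h3
  linarith

noncomputable def sg (A : Finset ℕ) (i : ℕ) : ℝ := if i ∈ A then 1 else -1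

lemma sg_insert_self (A : Finset ℕ) (N : ℕ) : sg (insert N A) N = 1 := by simp [sg]
lemma sg_insert_ne (A : Finset ℕ) {N i : ℕ} (h : i ≠ N) : sg (insert N A) i = sg A i := by
  simp [sg, Finset.mem_insert, h]
lemma sg_not_mem {A : Finset ℕ} {N : ℕ} (h : N ∉ A) : sg A N = -1 := by simp [sg, h]
lemma abs_sg (A : Finset ℕ) (i : ℕ) : |sg A i| = 1 := by
  unfold sg; split <;> simp

lemma signsum_pair (t : ℕ → ℝ) (N : ℕ) (A : Finset ℕ) (hA : A ∈ (Finset.range N).powerset) :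
    (∑ i ∈ Finset.range (N+1), sg A i * t i) = (∑ i ∈ Finset.range N, sg A i * t i) - t N ∧
    (∑ i ∈ Finset.range (N+1), sg (insert N A) i * t i)
        = (∑ i ∈ Finset.range N, sg A i * t i) + t N := by
  have hN : N ∉ Finset.range N := by simp
  have hAN : N ∉ A := fun h => hN (Finset.mem_powerset.mp hA h)
  constructor
  · rw [Finset.range_add_one, Finset.sum_insert hN, sg_not_mem hAN]
    ring
  · rw [Finset.range_add_one, Finset.sum_insert hN, sg_insert_self]
    rw [Finset.sum_congr rfl (fun i hi => by
      rw [sg_insert_ne A (by simp at hi; omega)])]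
    ring

lemma signsum_low {p : ℝ} (hp1 : 1 ≤ p) (hp2 : p ≤ 2) (t : ℕ → ℝ) :
    ∀ N : ℕ, ∑ A ∈ (Finset.range N).powerset, |∑ i ∈ Finset.range N, sg A i * t i| ^ p
      ≤ 2 ^ N * ∑ i ∈ Finset.range N, |t i| ^ p := by
  have hp0 : p ≠ 0 := by positivity
  intro N
  induction N with
  | zero => simp [Real.zero_rpow hp0]
  | succ N ih =>
    have hN : N ∉ Finset.range N := by simp
    rw [Finset.range_add_one, Finset.sum_powerset_insert hN]
    have key : ∀ A ∈ (Finset.range N).powerset,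
        (fun A => |∑ i ∈ insert N (Finset.range N), sg A i * t i| ^ p) A
          + (fun A => |∑ i ∈ insert N (Finset.range N), sg (insert N A) i * t i| ^ p) A
        ≤ 2 * (|∑ i ∈ Finset.range N, sg A i * t i| ^ p + |t N| ^ p) := by
      intro A hA
      obtain ⟨h1, h2⟩ := signsum_pair t N A hA
      rw [← Finset.range_add_one] at *
      simp only [h1, h2]
      have := clarkson_low hp1 hp2 (∑ i ∈ Finset.range N, sg A i * t i) (t N)
      rw [add_comm (|_ + _| ^ p)] at this
      convert this using 3 <;> ring
    calc ∑ A ∈ (Finset.range N).powerset, |∑ i ∈ insert N (Finset.range N), sg A i * t i| ^ p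
          + ∑ A ∈ (Finset.range N).powerset, |∑ i ∈ insert N (Finset.range N), sg (insert N A) i * t i| ^ p
        = ∑ A ∈ (Finset.range N).powerset,
            ((fun A => |∑ i ∈ insert N (Finset.range N), sg A i * t i| ^ p) A
              + (fun A => |∑ i ∈ insert N (Finset.range N), sg (insert N A) i * t i| ^ p) A) := by
          rw [Finset.sum_add_distrib]
      _ ≤ ∑ A ∈ (Finset.range N).powerset,
            2 * (|∑ i ∈ Finset.range N, sg A i * t i| ^ p + |t N| ^ p) :=
          Finset.sum_le_sum key
      _ = 2 * (∑ A ∈ (Finset.range N).powerset, |∑ i ∈ Finset.range N, sg A i * t i| ^ p)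
            + 2 ^ (N+1) * |t N| ^ p := by
          simp only [mul_add, Finset.sum_add_distrib, ← Finset.mul_sum, Finset.sum_const,
            Finset.card_powerset, Finset.card_range, nsmul_eq_mul]
          push_cast
          ring
      _ ≤ 2 * (2 ^ N * ∑ i ∈ Finset.range N, |t i| ^ p) + 2 ^ (N+1) * |t N| ^ p := by
          have := ih
          nlinarith [Real.rpow_nonneg (abs_nonneg (t N)) p]
      _ = 2 ^ (N+1) * ∑ i ∈ insert N (Finset.range N), |t i| ^ p := by
          rw [Finset.sum_insert hN]
          ring

lemma signsum_high {p : ℝ} (hp2 : 2 ≤ p) (t : ℕ → ℝ) :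
    ∀ N : ℕ, 2 ^ N * ∑ i ∈ Finset.range N, |t i| ^ p
      ≤ ∑ A ∈ (Finset.range N).powerset, |∑ i ∈ Finset.range N, sg A i * t i| ^ p := by
  intro N
  induction N with
  | zero => simp; positivity
  | succ N ih =>
    have hN : N ∉ Finset.range N := by simp
    rw [Finset.range_add_one, Finset.sum_powerset_insert hN]
    have key : ∀ A ∈ (Finset.range N).powerset,
        2 * (|∑ i ∈ Finset.range N, sg A i * t i| ^ p + |t N| ^ p)
        ≤ (fun A => |∑ i ∈ insert N (Finset.range N), sg A i * t i| ^ p) A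
          + (fun A => |∑ i ∈ insert N (Finset.range N), sg (insert N A) i * t i| ^ p) A := by
      intro A hA
      obtain ⟨h1, h2⟩ := signsum_pair t N A hA
      rw [← Finset.range_add_one] at *
      simp only [h1, h2]
      have := clarkson_high hp2 (∑ i ∈ Finset.range N, sg A i * t i) (t N)
      rw [add_comm (|_ + _| ^ p)] at this
      convert this using 3 <;> ring
    calc 2 ^ (N+1) * ∑ i ∈ insert N (Finset.range N), |t i| ^ p
        = 2 * (2 ^ N * ∑ i ∈ Finset.range N, |t i| ^ p) + 2 ^ (N+1) * |t N| ^ p := by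
          rw [Finset.sum_insert hN]; ring
      _ ≤ 2 * (∑ A ∈ (Finset.range N).powerset, |∑ i ∈ Finset.range N, sg A i * t i| ^ p)
            + 2 ^ (N+1) * |t N| ^ p := by nlinarith [ih]
      _ = ∑ A ∈ (Finset.range N).powerset,
            2 * (|∑ i ∈ Finset.range N, sg A i * t i| ^ p + |t N| ^ p) := by
          simp only [mul_add, Finset.sum_add_distrib, ← Finset.mul_sum, Finset.sum_const,
            Finset.card_powerset, Finset.card_range, nsmul_eq_mul]
          push_cast
          ring
      _ ≤ ∑ A ∈ (Finset.range N).powerset,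
            ((fun A => |∑ i ∈ insert N (Finset.range N), sg A i * t i| ^ p) A
              + (fun A => |∑ i ∈ insert N (Finset.range N), sg (insert N A) i * t i| ^ p) A) :=
          Finset.sum_le_sum key
      _ = _ := by rw [Finset.sum_add_distrib]

/-! ### special vectors -/

noncomputable def evec (i : ℕ) : ℕ → ℝ := fun n => if n = i then 1 else 0
noncomputable def trunc (N : ℕ) (y : ℕ → ℝ) : ℕ → ℝ := fun n => if n < N then y n else 0

lemma seqNorm_evec {q : ℕ → ℝ} (hq : ∀ n, 1 < q n) (i : ℕ) :
    ∀ k, seqNorm (toE q) (evec i) k = if i ≤ k + 1 then 1 else 0 := by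
  have hq0 : ∀ k, q k ≠ 0 := fun k => (lt_trans one_pos (hq k)).ne'
  have hz : ∀ k : ℕ, (0:ℝ) ^ q k = 0 := fun k => Real.zero_rpow (hq0 k)
  have ho : ∀ k : ℕ, (1:ℝ) ^ q k = 1 := fun k => Real.one_rpow _
  have hzi : ∀ k : ℕ, (0:ℝ) ^ (1 / q k) = 0 :=
    fun k => Real.zero_rpow (by simp [hq0 k])
  have hoi : ∀ k : ℕ, (1:ℝ) ^ (1 / q k) = 1 := fun k => Real.one_rpow _
  intro k
  induction k with
  | zero =>
    rw [seqNorm, boxPlus_toE hq]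
    rcases Nat.lt_or_ge i 2 with h | h
    · interval_cases i
      · rw [if_pos (by omega)]
        simp [evec, hz, ho, hzi, hoi]
      · rw [if_pos (by omega)]
        simp [evec, hz, ho, hzi, hoi]
    · rw [if_neg (by omega)]
      simp only [evec, if_neg (by omega : (0:ℕ) ≠ i), if_neg (by omega : (1:ℕ) ≠ i),
        abs_zero, hz, add_zero, hzi]
  | succ k ih =>
    rw [seqNorm_succ hq, ih]
    rcases Nat.lt_or_ge i (k+2) with h | h
    · rw [if_pos (by omega : i ≤ k + 1), if_pos (by omega : i ≤ k + 1 + 1)]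
      simp only [evec, if_neg (by omega : (k+2:ℕ) ≠ i), abs_zero, hz, ho, add_zero, hoi]
    · rcases Nat.lt_or_ge (k+2) i with h' | h'
      · rw [if_neg (by omega : ¬ i ≤ k + 1), if_neg (by omega : ¬ i ≤ k + 1 + 1)]
        simp only [evec, if_neg (by omega : (k+2:ℕ) ≠ i), abs_zero, hz, add_zero, hzi]
      · have h1 : (k+2:ℕ) = i := by omega
        rw [if_neg (by omega : ¬ i ≤ k + 1), if_pos (by omega : i ≤ k + 1 + 1)]
        simp only [evec, if_pos h1, abs_one, hz, ho, zero_add, hoi]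

lemma evec_supp (i : ℕ) : ∀ n, i + 2 ≤ n → evec i n = 0 := by
  intro n h; simp [evec]; omega

lemma Phi_evec {q : ℕ → ℝ} (hq : ∀ n, 1 < q n) (i : ℕ) : Phi (toE q) (evec i) = 1 := by
  rw [Phi_eq_of_stab hq (evec i) i (evec_supp i), seqNorm_evec hq]
  simp

lemma memVLp_evec {q : ℕ → ℝ} (hq : ∀ n, 1 < q n) (i : ℕ) : MemVLp (toE q) (evec i) :=
  memVLp_of_finsupp hq _ i (evec_supp i)

lemma trunc_supp (N : ℕ) (y : ℕ → ℝ) : ∀ n, N ≤ n → trunc N y n = 0 := by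
  intro n h; simp [trunc]; omega

lemma memVLp_trunc {q : ℕ → ℝ} (hq : ∀ n, 1 < q n) (N : ℕ) (y : ℕ → ℝ) :
    MemVLp (toE q) (trunc N y) :=
  memVLp_of_finsupp hq _ N (fun n h => trunc_supp N y n (by omega))

/-- Lower bound for nondecreasing exponents. -/
lemma seqNorm_trunc_ge {q : ℕ → ℝ} (hq : ∀ n, 1 < q n) (hmono : ∀ k, q k ≤ q (k+1))
    {N : ℕ} (y : ℕ → ℝ) (hy : ∀ n, n < N → |y n| = 1) :
    ∀ k, k + 2 ≤ N → ((k:ℝ) + 2) ^ (1 / q k) ≤ seqNorm (toE q) (trunc N y) k := by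
  have hq0 : ∀ k, (0:ℝ) < q k := fun k => lt_trans one_pos (hq k)
  intro k
  induction k with
  | zero =>
    intro hN
    rw [seqNorm, boxPlus_toE hq]
    have e0 : |trunc N y 0| = 1 := by
      rw [trunc]; simp only [if_pos (by omega : 0 < N)]; exact hy 0 (by omega)
    have e1 : |trunc N y 1| = 1 := by
      rw [trunc]; simp only [if_pos (by omega : 1 < N)]; exact hy 1 (by omega)
    rw [e0, e1, Real.one_rpow]
    norm_num
  | succ k ih =>
    intro hN
    have hk := ih (by omega)
    have hk0 : (0:ℝ) ≤ (k:ℝ) := Nat.cast_nonneg k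
    have hbase : (1:ℝ) ≤ (k:ℝ) + 2 := by linarith
    rw [seqNorm_succ hq]
    have e2 : |trunc N y (k+2)| = 1 := by
      rw [trunc]; simp only [if_pos (by omega : k + 2 < N)]; exact hy _ (by omega)
    rw [e2, Real.one_rpow]
    have hstep : ((k:ℝ) + 2) ≤ seqNorm (toE q) (trunc N y) k ^ q (k+1) := by
      calc ((k:ℝ) + 2) = ((k:ℝ) + 2) ^ (1:ℝ) := (Real.rpow_one _).symm
        _ ≤ ((k:ℝ) + 2) ^ ((1 / q k) * q (k+1)) := by
            apply Real.rpow_le_rpow_of_exponent_le hbase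
            rw [one_div, inv_mul_eq_div, le_div_iff₀ (hq0 k), one_mul]
            exact hmono k
        _ = (((k:ℝ) + 2) ^ (1 / q k)) ^ q (k+1) := Real.rpow_mul (by linarith) _ _
        _ ≤ seqNorm (toE q) (trunc N y) k ^ q (k+1) :=
            Real.rpow_le_rpow (by positivity) hk (hq0 (k+1)).le
    have hcast : ((k+1:ℕ):ℝ) + 2 = ((k:ℝ) + 2) + 1 := by push_cast; ring
    rw [hcast]
    apply Real.rpow_le_rpow (by linarith) (by linarith) (one_div_nonneg.mpr (hq0 (k+1)).le)

/-- Upper bound for nonincreasing exponents. -/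
lemma seqNorm_trunc_le {q : ℕ → ℝ} (hq : ∀ n, 1 < q n) (hanti : ∀ k, q (k+1) ≤ q k)
    {N : ℕ} (y : ℕ → ℝ) (hy : ∀ n, n < N → |y n| = 1) :
    ∀ k, k + 2 ≤ N → seqNorm (toE q) (trunc N y) k ≤ ((k:ℝ) + 2) ^ (1 / q k) := by
  have hq0 : ∀ k, (0:ℝ) < q k := fun k => lt_trans one_pos (hq k)
  intro k
  induction k with
  | zero =>
    intro hN
    rw [seqNorm, boxPlus_toE hq]
    have e0 : |trunc N y 0| = 1 := by
      rw [trunc]; simp only [if_pos (by omega : 0 < N)]; exact hy 0 (by omega)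
    have e1 : |trunc N y 1| = 1 := by
      rw [trunc]; simp only [if_pos (by omega : 1 < N)]; exact hy 1 (by omega)
    rw [e0, e1, Real.one_rpow]
    norm_num
  | succ k ih =>
    intro hN
    have hk := ih (by omega)
    have hk0 : (0:ℝ) ≤ (k:ℝ) := Nat.cast_nonneg k
    have hbase : (1:ℝ) ≤ (k:ℝ) + 2 := by linarith
    rw [seqNorm_succ hq]
    have e2 : |trunc N y (k+2)| = 1 := by
      rw [trunc]; simp only [if_pos (by omega : k + 2 < N)]; exact hy _ (by omega)
    rw [e2, Real.one_rpow]
    have hsn : (0:ℝ) ≤ seqNorm (toE q) (trunc N y) k := seqNorm_nonneg hq _ k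
    have hstep : seqNorm (toE q) (trunc N y) k ^ q (k+1) ≤ ((k:ℝ) + 2) := by
      calc seqNorm (toE q) (trunc N y) k ^ q (k+1)
          ≤ (((k:ℝ) + 2) ^ (1 / q k)) ^ q (k+1) :=
            Real.rpow_le_rpow hsn hk (hq0 (k+1)).le
        _ = ((k:ℝ) + 2) ^ ((1 / q k) * q (k+1)) := (Real.rpow_mul (by linarith) _ _).symm
        _ ≤ ((k:ℝ) + 2) ^ (1:ℝ) := by
            apply Real.rpow_le_rpow_of_exponent_le hbase
            rw [one_div, inv_mul_eq_div, div_le_one (hq0 k)]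
            exact hanti k
        _ = (k:ℝ) + 2 := Real.rpow_one _
    have hsn2 : (0:ℝ) ≤ seqNorm (toE q) (trunc N y) k ^ q (k+1) :=
      Real.rpow_nonneg hsn _
    have hcast : ((k+1:ℕ):ℝ) + 2 = ((k:ℝ) + 2) + 1 := by push_cast; ring
    rw [hcast]
    apply Real.rpow_le_rpow (by linarith) (by linarith) (one_div_nonneg.mpr (hq0 (k+1)).le)

lemma Phi_trunc_ge {q : ℕ → ℝ} (hq : ∀ n, 1 < q n) (hmono : ∀ k, q k ≤ q (k+1))
    (m : ℕ) (y : ℕ → ℝ) (hy : ∀ n, n < m + 2 → |y n| = 1) :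
    ENNReal.ofReal (((m:ℝ) + 2) ^ (1 / q m)) ≤ Phi (toE q) (trunc (m+2) y) := by
  refine le_trans (ENNReal.ofReal_le_ofReal
    (seqNorm_trunc_ge hq hmono y hy m le_rfl)) ?_
  exact le_iSup (fun k => ENNReal.ofReal (seqNorm (toE q) (trunc (m+2) y) k)) m

lemma Phi_trunc_le {q : ℕ → ℝ} (hq : ∀ n, 1 < q n) (hanti : ∀ k, q (k+1) ≤ q k)
    (m : ℕ) (y : ℕ → ℝ) (hy : ∀ n, n < m + 2 → |y n| = 1) :
    Phi (toE q) (trunc (m+2) y) ≤ ENNReal.ofReal (((m:ℝ) + 2) ^ (1 / q m)) := by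
  rw [Phi_eq_of_stab hq _ m (fun n h => trunc_supp _ y n h)]
  exact ENNReal.ofReal_le_ofReal (seqNorm_trunc_le hq hanti y hy m le_rfl)

/-! ### linearity -/

lemma trunc_succ (y : ℕ → ℝ) (N : ℕ) :
    trunc (N+1) y = trunc N y + y N • evec N := by
  funext n
  simp only [trunc, Pi.add_apply, Pi.smul_apply, evec, smul_eq_mul]
  rcases Nat.lt_trichotomy n N with h | h | h
  · rw [if_pos (by omega), if_pos h, if_neg (by omega), mul_zero, add_zero]
  · subst h
    rw [if_pos (by omega), if_neg (by omega), if_pos rfl, mul_one, zero_add]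
  · rw [if_neg (by omega), if_neg (by omega), if_neg (by omega), mul_zero, add_zero]

lemma smul_evec_supp (a : ℝ) (i : ℕ) : ∀ n, i + 2 ≤ n → (a • evec i) n = 0 := by
  intro n h
  simp only [Pi.smul_apply, evec, smul_eq_mul]
  rw [if_neg (by omega), mul_zero]

lemma T_trunc {q : ℕ → ℝ} (hq : ∀ n, 1 < q n) (T : (ℕ → ℝ) → ℕ → ℝ)
    (hadd : ∀ u v : ℕ → ℝ, MemVLp (toE q) u → MemVLp (toE q) v → T (u + v) = T u + T v)
    (hsmul : ∀ (a : ℝ) (u : ℕ → ℝ), MemVLp (toE q) u → T (a • u) = a • T u)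
    (y : ℕ → ℝ) : ∀ N, T (trunc N y) = ∑ i ∈ Finset.range N, y i • T (evec i) := by
  intro N
  induction N with
  | zero =>
    have h0 : trunc 0 y = ((0:ℝ) • (0 : ℕ → ℝ)) := by
      funext n; simp [trunc]
    rw [h0, hsmul 0 0 (memVLp_of_finsupp hq _ 0 (fun n _ => rfl))]
    simp
  | succ N ih =>
    rw [trunc_succ y N,
      hadd _ _ (memVLp_trunc hq N y) (memVLp_of_finsupp hq _ N (smul_evec_supp (y N) N)),
      hsmul _ _ (memVLp_evec hq N), ih, Finset.sum_range_succ]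

/-! ### ENNReal averaging -/

noncomputable def Gp (p : ℝ) (w : ℕ → ℝ) : ℝ≥0∞ := ∑' n, ENNReal.ofReal (|w n| ^ p)

lemma lpNormE_eq_Gp (p : ℝ) (w : ℕ → ℝ) : lpNormE p w = Gp p w ^ (1/p) := rfl

lemma Gp_eq_lp_pow {p : ℝ} (hp : 0 < p) (w : ℕ → ℝ) : Gp p w = lpNormE p w ^ p := by
  rw [lpNormE_eq_Gp, ← ENNReal.rpow_mul, one_div, inv_mul_cancel₀ hp.ne', ENNReal.rpow_one]

lemma sum_apply' (N : ℕ) (y : ℕ → ℕ → ℝ) (a : ℕ → ℝ) (n : ℕ) :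
    (∑ i ∈ Finset.range N, a i • y i) n = ∑ i ∈ Finset.range N, a i * y i n := by
  rw [Finset.sum_apply]
  simp

lemma avg_low {p : ℝ} (hp1 : 1 ≤ p) (hp2 : p ≤ 2) (y : ℕ → ℕ → ℝ) (N : ℕ) :
    ∑ A ∈ (Finset.range N).powerset, Gp p (∑ i ∈ Finset.range N, sg A i • y i)
      ≤ 2 ^ N * ∑ i ∈ Finset.range N, Gp p (y i) := by
  unfold Gp
  rw [← Summable.tsum_finsetSum (fun A _ => ENNReal.summable)]
  rw [← Summable.tsum_finsetSum (fun i _ => ENNReal.summable), ← ENNReal.tsum_mul_left]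
  apply ENNReal.tsum_le_tsum
  intro n
  have hnn : ∀ A : Finset ℕ, 0 ≤ |∑ i ∈ Finset.range N, sg A i * y i n| ^ p :=
    fun A => Real.rpow_nonneg (abs_nonneg _) _
  calc ∑ A ∈ (Finset.range N).powerset, ENNReal.ofReal (|(∑ i ∈ Finset.range N, sg A i • y i) n| ^ p)
      = ENNReal.ofReal (∑ A ∈ (Finset.range N).powerset, |∑ i ∈ Finset.range N, sg A i * y i n| ^ p) := by
        rw [ENNReal.ofReal_sum_of_nonneg (fun A _ => hnn A)]
        apply Finset.sum_congr rfl
        intro A _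
        rw [sum_apply' N y (sg A) n]
    _ ≤ ENNReal.ofReal (2 ^ N * ∑ i ∈ Finset.range N, |y i n| ^ p) :=
        ENNReal.ofReal_le_ofReal (signsum_low hp1 hp2 (fun i => y i n) N)
    _ = 2 ^ N * ∑ i ∈ Finset.range N, ENNReal.ofReal (|y i n| ^ p) := by
        rw [ENNReal.ofReal_mul (by positivity), ENNReal.ofReal_pow (by norm_num),
          ENNReal.ofReal_ofNat,
          ENNReal.ofReal_sum_of_nonneg (fun i _ => Real.rpow_nonneg (abs_nonneg _) _)]

lemma avg_high {p : ℝ} (hp2 : 2 ≤ p) (y : ℕ → ℕ → ℝ) (N : ℕ) :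
    2 ^ N * ∑ i ∈ Finset.range N, Gp p (y i)
      ≤ ∑ A ∈ (Finset.range N).powerset, Gp p (∑ i ∈ Finset.range N, sg A i • y i) := by
  unfold Gp
  rw [← Summable.tsum_finsetSum (fun A _ => ENNReal.summable)]
  rw [← Summable.tsum_finsetSum (fun i _ => ENNReal.summable), ← ENNReal.tsum_mul_left]
  apply ENNReal.tsum_le_tsum
  intro n
  have hnn : ∀ A : Finset ℕ, 0 ≤ |∑ i ∈ Finset.range N, sg A i * y i n| ^ p :=
    fun A => Real.rpow_nonneg (abs_nonneg _) _
  calc 2 ^ N * ∑ i ∈ Finset.range N, ENNReal.ofReal (|y i n| ^ p)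
      = ENNReal.ofReal (2 ^ N * ∑ i ∈ Finset.range N, |y i n| ^ p) := by
        rw [ENNReal.ofReal_mul (by positivity), ENNReal.ofReal_pow (by norm_num),
          ENNReal.ofReal_ofNat,
          ENNReal.ofReal_sum_of_nonneg (fun i _ => Real.rpow_nonneg (abs_nonneg _) _)]
    _ ≤ ENNReal.ofReal (∑ A ∈ (Finset.range N).powerset, |∑ i ∈ Finset.range N, sg A i * y i n| ^ p) :=
        ENNReal.ofReal_le_ofReal (signsum_high hp2 (fun i => y i n) N)
    _ = ∑ A ∈ (Finset.range N).powerset, ENNReal.ofReal (|(∑ i ∈ Finset.range N, sg A i • y i) n| ^ p) := by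
        rw [ENNReal.ofReal_sum_of_nonneg (fun A _ => hnn A)]
        apply Finset.sum_congr rfl
        intro A _
        rw [sum_apply' N y (sg A) n]

noncomputable def dExp (n : ℕ) : ℝ := 1 / (2 + Real.sqrt (Real.log (1 + (n:ℝ))))

lemma dExp_den_pos (n : ℕ) : 0 < 2 + Real.sqrt (Real.log (1 + (n:ℝ))) := by
  have := Real.sqrt_nonneg (Real.log (1 + (n:ℝ)))
  linarith

lemma dExp_pos (n : ℕ) : 0 < dExp n := by
  unfold dExp; exact div_pos one_pos (dExp_den_pos n)

lemma dExp_le_half (n : ℕ) : dExp n ≤ 1/2 := by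
  unfold dExp
  rw [div_le_div_iff₀ (dExp_den_pos n) (by norm_num)]
  have := Real.sqrt_nonneg (Real.log (1 + (n:ℝ)))
  linarith

lemma dExp_anti : ∀ k : ℕ, dExp (k+1) ≤ dExp k := by
  intro k
  unfold dExp
  apply one_div_le_one_div_of_le (dExp_den_pos k)
  have h1 : Real.log (1 + (k:ℝ)) ≤ Real.log (1 + ((k:ℕ)+1:ℝ)) := by
    apply Real.log_le_log (by positivity)
    push_cast; linarith
  have := Real.sqrt_le_sqrt h1
  push_cast at *
  linarith

lemma dExp_tendsto : Filter.Tendsto dExp Filter.atTop (nhds 0) := by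
  have hsqrt : Filter.Tendsto Real.sqrt Filter.atTop Filter.atTop := by
    apply Filter.tendsto_atTop_atTop_of_monotone (fun a b h => Real.sqrt_le_sqrt h)
    intro b
    exact ⟨b^2, by rw [Real.sqrt_sq_eq_abs]; exact le_abs_self b⟩
  have hlog : Filter.Tendsto (fun n : ℕ => Real.log (1 + (n:ℝ))) Filter.atTop Filter.atTop :=
    Real.tendsto_log_atTop.comp
      (Filter.tendsto_atTop_add_const_left _ 1 tendsto_natCast_atTop_atTop)
  have hden : Filter.Tendsto (fun n : ℕ => 2 + Real.sqrt (Real.log (1 + (n:ℝ))))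
      Filter.atTop Filter.atTop :=
    Filter.tendsto_atTop_add_const_left _ 2 (hsqrt.comp hlog)
  have h2 := hden.inv_tendsto_atTop
  have : dExp = fun n : ℕ => (2 + Real.sqrt (Real.log (1 + (n:ℝ))))⁻¹ := by
    funext n; rw [dExp, one_div]
  rw [this]
  exact h2

lemma dExp_growth {R κ : ℝ} (hR : 0 < R) (hκ : 0 < κ) :
    ∃ m : ℕ, R < ((m:ℝ) + 2) ^ (κ * dExp m) := by
  set B := max 0 (Real.log R / κ) with hB
  have hB0 : 0 ≤ B := le_max_left _ _
  have hBR : Real.log R ≤ κ * B := by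
    rcases le_max_iff.mpr (Or.inr (le_refl (Real.log R / κ))) with h
    calc Real.log R = κ * (Real.log R / κ) := by field_simp
      _ ≤ κ * B := by
          apply mul_le_mul_of_nonneg_left (le_max_right _ _) hκ.le
  set Y := max 16 ((4*(B+1))^2) with hY
  refine ⟨⌈Real.exp Y⌉₊, ?_⟩
  set m := ⌈Real.exp Y⌉₊ with hm
  have hme : Real.exp Y ≤ (m:ℝ) := Nat.le_ceil _
  set y := Real.log (1 + (m:ℝ)) with hy
  have hexp_pos : (0:ℝ) < Real.exp Y := Real.exp_pos Y
  have hyY : Y ≤ y := by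
    rw [hy, ← Real.log_exp Y]
    apply Real.log_le_log hexp_pos
    linarith
  have hy16 : (16:ℝ) ≤ y := le_trans (le_max_left _ _) hyY
  set s := Real.sqrt y with hs
  have hs0 : 0 ≤ s := Real.sqrt_nonneg y
  have hss : s * s = y := Real.mul_self_sqrt (by linarith)
  have hs4B : 4*(B+1) ≤ s := by
    have h1 : Real.sqrt ((4*(B+1))^2) ≤ s := Real.sqrt_le_sqrt (le_trans (le_max_right _ _) hyY)
    rwa [Real.sqrt_sq (by positivity)] at h1
  have hs4 : (4:ℝ) ≤ s := by nlinarith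
  have hd : dExp m = 1 / (2 + s) := rfl
  have hden : (0:ℝ) < 2 + s := by linarith
  have hstep1 : (B + 1) * (2 + s) ≤ y := by nlinarith
  have hstep2 : y ≤ Real.log ((m:ℝ) + 2) := by
    apply Real.log_le_log (by positivity)
    linarith
  have hkey : Real.log R < κ * dExp m * Real.log ((m:ℝ) + 2) := by
    have h3 : (B + 1) ≤ y / (2 + s) := (le_div_iff₀ hden).mpr hstep1
    have h4 : y / (2 + s) ≤ Real.log ((m:ℝ) + 2) / (2 + s) :=
      div_le_div_of_nonneg_right hstep2 hden.le
    have h5 : κ * (B+1) ≤ κ * (Real.log ((m:ℝ) + 2) / (2+s)) := by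
      apply mul_le_mul_of_nonneg_left (le_trans h3 h4) hκ.le
    have h6 : κ * dExp m * Real.log ((m:ℝ) + 2) = κ * (Real.log ((m:ℝ) + 2) / (2+s)) := by
      rw [hd]; field_simp
    rw [h6]
    calc Real.log R ≤ κ * B := hBR
      _ < κ * (B+1) := by nlinarith
      _ ≤ _ := h5
  calc R = Real.exp (Real.log R) := (Real.exp_log hR).symm
    _ < Real.exp (κ * dExp m * Real.log ((m:ℝ) + 2)) := Real.exp_lt_exp.mpr hkey
    _ = ((m:ℝ) + 2) ^ (κ * dExp m) := by
        rw [Real.rpow_def_of_pos (by positivity), mul_comm]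

/-- Common numeric endgame. -/
lemma final_contra {X α β c C κd : ℝ} (hX : (1:ℝ) ≤ X) (hc : 0 < c) (hcC : c ≤ C)
    (hκd : 0 < κd) (hle : κd ≤ α - β)
    (h : c * X ^ α ≤ C * X ^ β) (hgrow : C / c < X ^ κd) : False := by
  have hX0 : (0:ℝ) < X := by linarith
  have hXβ : (0:ℝ) < X ^ β := Real.rpow_pos_of_pos hX0 β
  have h1 : X ^ (α - β) ≤ C / c := by
    rw [Real.rpow_sub hX0, div_le_div_iff₀ hXβ hc]
    calc X ^ α * c = c * X ^ α := by ring
      _ ≤ C * X ^ β := h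
  have h2 : X ^ κd ≤ X ^ (α - β) := Real.rpow_le_rpow_of_exponent_le hX hle
  linarith

lemma contra_low (p : ℝ) (hp1 : 1 < p) (hp2 : p ≤ 2) (q : ℕ → ℝ)
    (hq : ∀ n, 1 < q n) (hmono : ∀ k, q k ≤ q (k+1)) (hqle : ∀ n, q n ≤ p)
    (hqd : ∀ n, p - q n = (p-1) * dExp n)
    (T : (ℕ → ℝ) → ℕ → ℝ) (c C : ℝ) (hc : 0 < c) (hcC : c ≤ C)
    (hadd : ∀ u v : ℕ → ℝ, MemVLp (toE q) u → MemVLp (toE q) v → T (u + v) = T u + T v)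
    (hsmul : ∀ (a : ℝ) (u : ℕ → ℝ), MemVLp (toE q) u → T (a • u) = a • T u)
    (hbound : ∀ u : ℕ → ℝ, MemVLp (toE q) u →
      ENNReal.ofReal c * Phi (toE q) u ≤ lpNormE p (T u) ∧
      lpNormE p (T u) ≤ ENNReal.ofReal C * Phi (toE q) u) : False := by
  have hp0 : (0:ℝ) < p := by linarith
  have hC0 : (0:ℝ) < C := lt_of_lt_of_le hc hcC
  set κ : ℝ := (p - 1) / (2 * p ^ 2) with hκdef
  have hκ : 0 < κ := by apply div_pos <;> nlinarith
  obtain ⟨m, hgrow⟩ := dExp_growth (div_pos hC0 hc) hκ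
  set N : ℕ := m + 2 with hN
  -- upper bound on each basis image
  have hyC : ∀ i : ℕ, Gp p (T (evec i)) ≤ (ENNReal.ofReal C) ^ p := by
    intro i
    have h := (hbound (evec i) (memVLp_evec hq i)).2
    rw [Phi_evec hq i, mul_one] at h
    rw [Gp_eq_lp_pow hp0]
    exact ENNReal.rpow_le_rpow h hp0.le
  -- averaging
  have hsum : ∑ A ∈ (Finset.range N).powerset, Gp p (T (trunc N (sg A)))
      ≤ 2 ^ N * ((N : ℝ≥0∞) * (ENNReal.ofReal C) ^ p) := by
    calc ∑ A ∈ (Finset.range N).powerset, Gp p (T (trunc N (sg A)))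
        = ∑ A ∈ (Finset.range N).powerset,
            Gp p (∑ i ∈ Finset.range N, sg A i • T (evec i)) := by
          apply Finset.sum_congr rfl
          intro A _
          rw [T_trunc hq T hadd hsmul (sg A) N]
      _ ≤ 2 ^ N * ∑ i ∈ Finset.range N, Gp p (T (evec i)) :=
          avg_low hp1.le hp2 (fun i => T (evec i)) N
      _ ≤ 2 ^ N * ((N : ℝ≥0∞) * (ENNReal.ofReal C) ^ p) := by
          apply mul_le_mul_right
          calc ∑ i ∈ Finset.range N, Gp p (T (evec i))
              ≤ ∑ _i ∈ Finset.range N, (ENNReal.ofReal C) ^ p :=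
                Finset.sum_le_sum (fun i _ => hyC i)
            _ = (N : ℝ≥0∞) * (ENNReal.ofReal C) ^ p := by
                rw [Finset.sum_const, Finset.card_range, nsmul_eq_mul]
  have hex : ∃ A ∈ (Finset.range N).powerset,
      Gp p (T (trunc N (sg A))) ≤ (N : ℝ≥0∞) * (ENNReal.ofReal C) ^ p := by
    apply ENNReal.exists_le_of_sum_le ⟨∅, Finset.empty_mem_powerset _⟩
    rw [Finset.sum_const, Finset.card_powerset, Finset.card_range, nsmul_eq_mul]
    refine hsum.trans_eq ?_
    norm_num
  obtain ⟨A, _, hA⟩ := hex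
  -- lower bound
  have hlow := (hbound (trunc N (sg A)) (memVLp_trunc hq N (sg A))).1
  have hPhi : ENNReal.ofReal (((m:ℝ) + 2) ^ (1 / q m)) ≤ Phi (toE q) (trunc N (sg A)) :=
    Phi_trunc_ge hq hmono m (sg A) (fun n _ => abs_sg A n)
  have hchain : ENNReal.ofReal (c * ((m:ℝ) + 2) ^ (1 / q m))
      ≤ ENNReal.ofReal (((m:ℝ) + 2) ^ (1 / p) * C) := by
    calc ENNReal.ofReal (c * ((m:ℝ) + 2) ^ (1 / q m))
        = ENNReal.ofReal c * ENNReal.ofReal (((m:ℝ) + 2) ^ (1 / q m)) :=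
          ENNReal.ofReal_mul hc.le
      _ ≤ ENNReal.ofReal c * Phi (toE q) (trunc N (sg A)) := mul_le_mul_right hPhi _
      _ ≤ lpNormE p (T (trunc N (sg A))) := hlow
      _ = Gp p (T (trunc N (sg A))) ^ (1/p) := lpNormE_eq_Gp p _
      _ ≤ ((N : ℝ≥0∞) * (ENNReal.ofReal C) ^ p) ^ (1/p) :=
          ENNReal.rpow_le_rpow hA (by positivity)
      _ = ENNReal.ofReal (((m:ℝ) + 2) ^ (1 / p) * C) := by
          rw [ENNReal.mul_rpow_of_nonneg _ _ (by positivity),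
            ← ENNReal.rpow_mul, mul_one_div, div_self hp0.ne', ENNReal.rpow_one,
            ← ENNReal.ofReal_natCast N,
            ENNReal.ofReal_rpow_of_pos (by positivity : (0:ℝ) < ((N:ℕ):ℝ)),
            ← ENNReal.ofReal_mul (by positivity)]
          congr 1
          push_cast [hN]
          ring
  have hreal : c * ((m:ℝ) + 2) ^ (1 / q m) ≤ ((m:ℝ) + 2) ^ (1 / p) * C := by
    have := (ENNReal.ofReal_le_ofReal_iff (by positivity)).mp hchain
    exact this
  -- numeric endgame
  have hqm := hq m
  have hqmp := hqle m
  have hκd : κ * dExp m ≤ 1 / q m - 1 / p := by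
    have hd := hqd m
    have hqm0 : (0:ℝ) < q m := by linarith
    have he : 1 / q m - 1 / p = (p - q m) / (q m * p) := by
      field_simp
    rw [he, hd]
    have h2 : κ * dExp m = (p-1) * dExp m / (2*p^2) := by rw [hκdef]; ring
    rw [h2, div_le_div_iff₀ (by positivity) (by positivity)]
    have hd0 : (0:ℝ) ≤ (p-1) * dExp m := by nlinarith [dExp_pos m]
    nlinarith [mul_le_mul_of_nonneg_left (by nlinarith : q m * p ≤ 2*p^2) hd0]
  exact final_contra (by push_cast; linarith : (1:ℝ) ≤ (m:ℝ)+2) hc hcC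
    (mul_pos hκ (dExp_pos m)) hκd
    (by linarith [hreal] : c * ((m:ℝ)+2) ^ (1 / q m) ≤ C * ((m:ℝ)+2) ^ (1 / p)) hgrow

lemma contra_high (p : ℝ) (hp2 : 2 ≤ p) (q : ℕ → ℝ)
    (hq : ∀ n, 1 < q n) (hanti : ∀ k, q (k+1) ≤ q k)
    (hqge : ∀ n, p ≤ q n) (hqle : ∀ n, q n ≤ 2*p)
    (hqd : ∀ n, q n - p = (p-1) * dExp n)
    (T : (ℕ → ℝ) → ℕ → ℝ) (c C : ℝ) (hc : 0 < c) (hcC : c ≤ C)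
    (hadd : ∀ u v : ℕ → ℝ, MemVLp (toE q) u → MemVLp (toE q) v → T (u + v) = T u + T v)
    (hsmul : ∀ (a : ℝ) (u : ℕ → ℝ), MemVLp (toE q) u → T (a • u) = a • T u)
    (hbound : ∀ u : ℕ → ℝ, MemVLp (toE q) u →
      ENNReal.ofReal c * Phi (toE q) u ≤ lpNormE p (T u) ∧
      lpNormE p (T u) ≤ ENNReal.ofReal C * Phi (toE q) u) : False := by
  have hp1 : (1:ℝ) < p := by linarith
  have hp0 : (0:ℝ) < p := by linarith
  have hC0 : (0:ℝ) < C := lt_of_lt_of_le hc hcC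
  set κ : ℝ := (p - 1) / (2 * p ^ 2) with hκdef
  have hκ : 0 < κ := by apply div_pos <;> nlinarith
  obtain ⟨m, hgrow⟩ := dExp_growth (div_pos hC0 hc) hκ
  set N : ℕ := m + 2 with hN
  -- lower bound on each basis image
  have hyc : ∀ i : ℕ, (ENNReal.ofReal c) ^ p ≤ Gp p (T (evec i)) := by
    intro i
    have h := (hbound (evec i) (memVLp_evec hq i)).1
    rw [Phi_evec hq i, mul_one] at h
    rw [Gp_eq_lp_pow hp0]
    exact ENNReal.rpow_le_rpow h hp0.le
  have hsum : 2 ^ N * ((N : ℝ≥0∞) * (ENNReal.ofReal c) ^ p)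
      ≤ ∑ A ∈ (Finset.range N).powerset, Gp p (T (trunc N (sg A))) := by
    calc 2 ^ N * ((N : ℝ≥0∞) * (ENNReal.ofReal c) ^ p)
        ≤ 2 ^ N * ∑ i ∈ Finset.range N, Gp p (T (evec i)) := by
          apply mul_le_mul_right
          calc (N : ℝ≥0∞) * (ENNReal.ofReal c) ^ p
              = ∑ _i ∈ Finset.range N, (ENNReal.ofReal c) ^ p := by
                rw [Finset.sum_const, Finset.card_range, nsmul_eq_mul]
            _ ≤ ∑ i ∈ Finset.range N, Gp p (T (evec i)) :=
                Finset.sum_le_sum (fun i _ => hyc i)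
      _ ≤ ∑ A ∈ (Finset.range N).powerset,
            Gp p (∑ i ∈ Finset.range N, sg A i • T (evec i)) :=
          avg_high hp2 (fun i => T (evec i)) N
      _ = ∑ A ∈ (Finset.range N).powerset, Gp p (T (trunc N (sg A))) := by
          apply Finset.sum_congr rfl
          intro A _
          rw [T_trunc hq T hadd hsmul (sg A) N]
  have hex : ∃ A ∈ (Finset.range N).powerset,
      (N : ℝ≥0∞) * (ENNReal.ofReal c) ^ p ≤ Gp p (T (trunc N (sg A))) := by
    apply ENNReal.exists_le_of_sum_le ⟨∅, Finset.empty_mem_powerset _⟩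
    rw [Finset.sum_const, Finset.card_powerset, Finset.card_range, nsmul_eq_mul]
    refine le_trans (le_of_eq ?_) hsum
    norm_num
  obtain ⟨A, _, hA⟩ := hex
  have hhigh := (hbound (trunc N (sg A)) (memVLp_trunc hq N (sg A))).2
  have hPhi : Phi (toE q) (trunc N (sg A)) ≤ ENNReal.ofReal (((m:ℝ) + 2) ^ (1 / q m)) :=
    Phi_trunc_le hq hanti m (sg A) (fun n _ => abs_sg A n)
  have hchain : ENNReal.ofReal (c * ((m:ℝ) + 2) ^ (1 / p))
      ≤ ENNReal.ofReal (((m:ℝ) + 2) ^ (1 / q m) * C) := by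
    calc ENNReal.ofReal (c * ((m:ℝ) + 2) ^ (1 / p))
        = ((N : ℝ≥0∞) * (ENNReal.ofReal c) ^ p) ^ (1/p) := by
          rw [ENNReal.mul_rpow_of_nonneg _ _ (by positivity),
            ← ENNReal.rpow_mul, mul_one_div, div_self hp0.ne', ENNReal.rpow_one,
            ← ENNReal.ofReal_natCast N,
            ENNReal.ofReal_rpow_of_pos (by positivity : (0:ℝ) < ((N:ℕ):ℝ)),
            ← ENNReal.ofReal_mul (by positivity)]
          rw [mul_comm c (((m:ℝ)+2) ^ (1/p))]
          congr 1
          push_cast [hN]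
          ring
      _ ≤ Gp p (T (trunc N (sg A))) ^ (1/p) := ENNReal.rpow_le_rpow hA (by positivity)
      _ = lpNormE p (T (trunc N (sg A))) := (lpNormE_eq_Gp p _).symm
      _ ≤ ENNReal.ofReal C * Phi (toE q) (trunc N (sg A)) := hhigh
      _ ≤ ENNReal.ofReal C * ENNReal.ofReal (((m:ℝ) + 2) ^ (1 / q m)) :=
          mul_le_mul_right hPhi _
      _ = ENNReal.ofReal (((m:ℝ) + 2) ^ (1 / q m) * C) := by
          rw [← ENNReal.ofReal_mul hC0.le, mul_comm]
  have hreal : c * ((m:ℝ) + 2) ^ (1 / p) ≤ ((m:ℝ) + 2) ^ (1 / q m) * C :=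
    (ENNReal.ofReal_le_ofReal_iff (by positivity)).mp hchain
  have hqm := hq m
  have hκd : κ * dExp m ≤ 1 / p - 1 / q m := by
    have hd := hqd m
    have hqm0 : (0:ℝ) < q m := by linarith
    have he : 1 / p - 1 / q m = (q m - p) / (q m * p) := by
      rw [div_sub_div _ _ hp0.ne' hqm0.ne']
      ring_nf
    rw [he, hd]
    have h2 : κ * dExp m = (p-1) * dExp m / (2*p^2) := by rw [hκdef]; ring
    rw [h2, div_le_div_iff₀ (by positivity) (by positivity)]
    have hd0 : (0:ℝ) ≤ (p-1) * dExp m := by nlinarith [dExp_pos m]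
    nlinarith [mul_le_mul_of_nonneg_left (by nlinarith [hqle m] : q m * p ≤ 2*p^2) hd0]
  exact final_contra (by push_cast; linarith : (1:ℝ) ≤ (m:ℝ)+2) hc hcC
    (mul_pos hκ (dExp_pos m)) hκd
    (by linarith [hreal] : c * ((m:ℝ)+2) ^ (1 / p) ≤ C * ((m:ℝ)+2) ^ (1 / q m)) hgrow

/-- For every `1 < p < ∞` there is an exponent function `q : ℕ → (1,∞)` with
`q(n) → p` such that `ℓ^{q(·)}` does not embed isomorphically into `ℓ^p`. -/
theorem exists_exponent_not_embedding_into_lp (p : ℝ) (hp : 1 < p) :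
    ∃ q : ℕ → ℝ, (∀ n, 1 < q n) ∧
      Filter.Tendsto q Filter.atTop (nhds p) ∧
      ¬ ∃ (T : (ℕ → ℝ) → ℕ → ℝ) (c C : ℝ), 0 < c ∧ c ≤ C ∧
        (∀ u v : ℕ → ℝ, MemVLp (toE q) u → MemVLp (toE q) v →
          T (u + v) = T u + T v) ∧
        (∀ (a : ℝ) (u : ℕ → ℝ), MemVLp (toE q) u → T (a • u) = a • T u) ∧
        (∀ u : ℕ → ℝ, MemVLp (toE q) u →
          ENNReal.ofReal c * Phi (toE q) u ≤ lpNormE p (T u) ∧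
          lpNormE p (T u) ≤ ENNReal.ofReal C * Phi (toE q) u) := by
  have hdt : Filter.Tendsto (fun n => (p-1) * dExp n) Filter.atTop (nhds 0) := by
    have := dExp_tendsto.const_mul (p-1)
    simpa using this
  rcases le_or_gt p 2 with hp2 | hp2
  · -- 1 < p ≤ 2 : approach p from below
    refine ⟨fun n => p - (p-1) * dExp n, ?_, ?_, ?_⟩
    · intro n
      show (1:ℝ) < p - (p-1) * dExp n
      have h1 := dExp_le_half n
      have h2 := dExp_pos n
      nlinarith
    · have : Filter.Tendsto (fun n => p - (p-1) * dExp n) Filter.atTop (nhds (p - 0)) :=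
        (tendsto_const_nhds).sub hdt
      simpa using this
    · rintro ⟨T, c, C, hc, hcC, hadd, hsmul, hbound⟩
      refine contra_low p hp hp2 _ ?_ ?_ ?_ ?_ T c C hc hcC hadd hsmul hbound
      · intro n
        have h1 := dExp_le_half n
        have h2 := dExp_pos n
        nlinarith
      · intro k
        have := dExp_anti k
        nlinarith
      · intro n
        have := dExp_pos n
        nlinarith
      · intro n; ring
  · -- p > 2 : approach p from above
    refine ⟨fun n => p + (p-1) * dExp n, ?_, ?_, ?_⟩
    · intro n
      show (1:ℝ) < p + (p-1) * dExp n
      have h2 := dExp_pos n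
      nlinarith
    · have : Filter.Tendsto (fun n => p + (p-1) * dExp n) Filter.atTop (nhds (p + 0)) :=
        (tendsto_const_nhds).add hdt
      simpa using this
    · rintro ⟨T, c, C, hc, hcC, hadd, hsmul, hbound⟩
      refine contra_high p hp2.le _ ?_ ?_ ?_ ?_ ?_ T c C hc hcC hadd hsmul hbound
      · intro n
        have h2 := dExp_pos n
        nlinarith
      · intro k
        have := dExp_anti k
        nlinarith
      · intro n
        have := dExp_pos n
        nlinarith
      · intro n
        have h1 := dExp_le_half n
        have h2 := dExp_pos n
        nlinarith
      · intro n; ring
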